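/- arXiv:2305.10543 — 2 statements merged into one kernel-verified Lean document; each statement's English description precedes it below -/
import Mathlib

section
/- If every simple object of C admits an epimorphism from a projective object of C, then C has enough projectives: every object of C admits an epimorphism from a projective object. -/
/-!
Induct along a composition series `0 = V₀ ⊆ ⋯ ⊆ Vₙ = V`. If `P ↠ Vᵢ` and `Q ↠ Vᵢ₊₁ / Vᵢ` are
epimorphisms from projectives, lift `Q ↠ Vᵢ₊₁ / Vᵢ` through the quotient map to `Q ⟶ Vᵢ₊₁`; the
induced map `P ⊞ Q ⟶ Vᵢ₊₁` is an epimorphism from a projective.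
-/

open CategoryTheory CategoryTheory.Limits

/-- An object of an abelian category has finite length if it admits a finite filtration
`0 = V₀ ⊆ V₁ ⊆ ... ⊆ Vₙ = V` (encoded as a chain of monomorphisms) with all successive
quotients (cokernels of the monomorphisms) simple. -/
def HasFiniteLength {C : Type*} [Category C] [Abelian C] (V : C) : Prop :=
  ∃ (n : ℕ) (X : Fin (n + 1) → C) (f : ∀ i : Fin n, X i.castSucc ⟶ X i.succ),
    IsZero (X 0) ∧ Nonempty (X (Fin.last n) ≅ V) ∧
      ∀ i : Fin n, Mono (f i) ∧ Simple (cokernel (f i))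

namespace CategoryTheory.ProjectivePresentation

variable {C : Type*} [Category C] [Abelian C]

noncomputable def ofIsZero {X : C} (hX : IsZero X) : ProjectivePresentation X :=
  have := hX.projective
  ⟨X, 𝟙 X⟩

def ofIso {X Y : C} (P : ProjectivePresentation X) (e : X ≅ Y) : ProjectivePresentation Y :=
  ⟨P.p, P.f ≫ e.hom⟩

/-- Epi by the four lemma, applied to the morphism from the split sequence
`P.p ⟶ P.p ⊞ Q.p ⟶ Q.p` to the exact sequence `X ⟶ Y ⟶ cokernel f`. -/
noncomputable def ofCokernel {X Y : C} (f : X ⟶ Y) (P : ProjectivePresentation X)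
    (Q : ProjectivePresentation (cokernel f)) : ProjectivePresentation Y :=
  let lift : Q.p ⟶ Y := Projective.factorThru Q.f (cokernel.π f)
  let φ : ShortComplex.mk biprod.inl biprod.snd biprod.inl_snd ⟶
      ShortComplex.mk f (cokernel.π f) (cokernel.condition f) :=
    { τ₁ := P.f
      τ₂ := biprod.desc (P.f ≫ f) lift
      τ₃ := Q.f
      comm₂₃ := biprod.hom_ext' _ _ (by simp) (by simp [lift]) }
  have : Epi φ.τ₂ := ShortComplex.epi_of_epi_of_epi_of_epi φ
    (ShortComplex.exact_of_g_is_cokernel _ (cokernelIsCokernel f)) inferInstance P.epi Q.epi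
  ⟨P.p ⊞ Q.p, φ.τ₂⟩

end CategoryTheory.ProjectivePresentation

open CategoryTheory.ProjectivePresentation in
theorem nonempty_projectivePresentation_last_of_cokernels {C : Type*} [Category C] [Abelian C]
    {n : ℕ} (X : Fin (n + 1) → C) (f : ∀ i : Fin n, X i.castSucc ⟶ X i.succ)
    (h₀ : Nonempty (ProjectivePresentation (X 0)))
    (hf : ∀ i, Nonempty (ProjectivePresentation (cokernel (f i)))) :
    Nonempty (ProjectivePresentation (X (Fin.last n))) := by
  induction n with
  | zero => exact h₀
  | succ n ih =>
    obtain ⟨P⟩ := ih (fun i => X i.castSucc) (fun i => f i.castSucc) h₀ (fun i => hf i.castSucc)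
    obtain ⟨Q⟩ := hf (Fin.last n)
    exact ⟨ofCokernel (f (Fin.last n)) P Q⟩

theorem stmt3 (C : Type*) [Category C] [Abelian C]
    (finiteLength : ∀ V : C, HasFiniteLength V)
    (hsimple : ∀ S : C, Simple S → ∃ (P : C) (f : P ⟶ S), Projective P ∧ Epi f) :
    ∀ V : C, ∃ (P : C) (f : P ⟶ V), Projective P ∧ Epi f := by
  intro V
  obtain ⟨n, X, f, hX₀, ⟨e⟩, hf⟩ := finiteLength V
  have hcok : ∀ i, Nonempty (ProjectivePresentation (cokernel (f i))) := fun i => by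
    obtain ⟨P, p, _, _⟩ := hsimple _ (hf i).2
    exact ⟨⟨P, p⟩⟩
  obtain ⟨P⟩ := nonempty_projectivePresentation_last_of_cokernels X f
    ⟨.ofIsZero hX₀⟩ hcok
  exact ⟨_, (P.ofIso e).f, inferInstance, inferInstance⟩
end

section
/- The following are equivalent: (i) for every nonzero subobject E of A one has b(E)·ℓ(A) ≤ b(A)·ℓ(E) (β-semistability: every nonzero subobject has slope b(E)/ℓ(E) at most b(A)/ℓ(A)); (ii) for every ℤ-weighted filtration (A_w)_{w∈ℤ} of A, the (finite) sum ∑_{w∈ℤ} w·( ℓ(A)·(b(A_w) − b(A_{w+1})) − b(A)·(ℓ(A_w) − ℓ(A_{w+1})) ) is ≤ 0. -/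
open CategoryTheory CategoryTheory.Limits ZeroObject

section Aux

variable {C : Type*} [Category C] [Abelian C]

/-- An additive function vanishes on zero objects. -/
lemma add_fn_zero (b : C → ℤ)
    (hb : ∀ S : ShortComplex C, S.ShortExact → b S.X₂ = b S.X₁ + b S.X₃)
    {Z : C} (hZ : IsZero Z) : b Z = 0 := by
  have hm : Mono (𝟙 Z) := inferInstance
  have he : Epi (𝟙 Z) := inferInstance
  have hzero : (𝟙 Z) ≫ (𝟙 Z) = 0 := hZ.eq_of_tgt _ _
  have hS : (ShortComplex.mk (𝟙 Z) (𝟙 Z) hzero).ShortExact :=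
    { exact := ShortComplex.exact_of_isZero_X₂ _ hZ
      mono_f := hm
      epi_g := he }
  have := hb _ hS
  dsimp at this
  omega

/-- An additive function is invariant under isomorphism. -/
lemma add_fn_iso (b : C → ℤ)
    (hb : ∀ S : ShortComplex C, S.ShortExact → b S.X₂ = b S.X₁ + b S.X₃)
    {X Y : C} (e : X ≅ Y) : b X = b Y := by
  have hzero : e.hom ≫ (0 : Y ⟶ 0) = 0 := comp_zero
  have hS : (ShortComplex.mk e.hom (0 : Y ⟶ 0) hzero).ShortExact :=
    { exact := by
        rw [ShortComplex.exact_iff_epi _ rfl]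
        exact inferInstanceAs (Epi e.hom)
      mono_f := inferInstanceAs (Mono e.hom)
      epi_g := inferInstance }
  have h1 := hb _ hS
  have h0 : b (0 : C) = 0 := add_fn_zero b hb (isZero_zero C)
  dsimp at h1
  omega

/-- Telescoping identity. -/
lemma tele_sum (g : ℤ → ℤ) (M N : ℤ) (h : M ≤ N) :
    ∑ w ∈ Finset.Icc M N, (w * (g w - g (w + 1))) =
      M * g M - N * g (N + 1) + ∑ w ∈ Finset.Icc (M + 1) N, g w := by
  refine Int.le_induction (motive := fun k _ => ∑ w ∈ Finset.Icc M k, (w * (g w - g (w + 1))) =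
      M * g M - k * g (k + 1) + ∑ w ∈ Finset.Icc (M + 1) k, g w) ?_ ?_ N h
  · show _ = _
    rw [Finset.Icc_self, Finset.sum_singleton,
      Finset.Icc_eq_empty (by omega), Finset.sum_empty]
    ring
  · intro N hMN ih
    show _ = _
    have hins : ∀ a : ℤ, a ≤ N + 1 → Finset.Icc a (N + 1) = insert (N + 1) (Finset.Icc a N) := by
      intro a ha
      ext x
      simp only [Finset.mem_Icc, Finset.mem_insert]
      omega
    rw [hins M (by omega), Finset.sum_insert (by simp), hins (M + 1) (by omega),
      Finset.sum_insert (by simp), ih]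
    ring

end Aux

theorem stmt9 (C : Type*) [Category C] [Abelian C]
    (b ℓ : C → ℤ)
    (hb : ∀ S : ShortComplex C, S.ShortExact → b S.X₂ = b S.X₁ + b S.X₃)
    (hℓ : ∀ S : ShortComplex C, S.ShortExact → ℓ S.X₂ = ℓ S.X₁ + ℓ S.X₃)
    (A : C)
    (hpos : ∀ E : Subobject A, E ≠ ⊥ → 0 < ℓ (E : C)) :
    (∀ E : Subobject A, E ≠ ⊥ → b (E : C) * ℓ A ≤ b A * ℓ (E : C)) ↔
      ∀ (F : ℤ → Subobject A), Antitone F →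
        ∀ M N : ℤ, (∀ w, N ≤ w → F w = ⊥) → (∀ w, w ≤ M → F w = ⊤) →
          ∑ w ∈ Finset.Icc M N,
              w * (ℓ A * (b (F w : C) - b (F (w + 1) : C)) -
                b A * (ℓ (F w : C) - ℓ (F (w + 1) : C))) ≤ 0 := by
  -- the "slope defect" function
  set f : Subobject A → ℤ := fun E => ℓ A * b (E : C) - b A * ℓ (E : C) with hf
  have hbot : f ⊥ = 0 := by
    have hZ : IsZero (((⊥ : Subobject A) : C)) :=
      (isZero_zero C).of_iso Subobject.botCoeIsoZero
    have h1 : b (((⊥ : Subobject A) : C)) = 0 := add_fn_zero b hb hZ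
    have h2 : ℓ (((⊥ : Subobject A) : C)) = 0 := add_fn_zero ℓ hℓ hZ
    simp [hf, h1, h2]
  have htop : f ⊤ = 0 := by
    have e : (((⊤ : Subobject A) : C)) ≅ A := asIso (⊤ : Subobject A).arrow
    have h1 : b (((⊤ : Subobject A) : C)) = b A := add_fn_iso b hb e
    have h2 : ℓ (((⊤ : Subobject A) : C)) = ℓ A := add_fn_iso ℓ hℓ e
    simp [hf, h1, h2]
    ring
  constructor
  · intro hss F _hF M N hN hM
    have hfle : ∀ w : ℤ, f (F w) ≤ 0 := by
      intro w
      by_cases h : F w = ⊥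
      · rw [h, hbot]
      · have h2 := hss (F w) h
        simp only [hf]
        linarith [h2, mul_comm (b ((F w : C))) (ℓ A)]
    -- rewrite each term as w * (f (F w) - f (F (w+1)))
    have hterm : ∀ w : ℤ,
        w * (ℓ A * (b (F w : C) - b (F (w + 1) : C)) -
          b A * (ℓ (F w : C) - ℓ (F (w + 1) : C))) =
        w * (f (F w) - f (F (w + 1))) := by
      intro w; simp only [hf]; ring
    rw [Finset.sum_congr rfl (fun w _ => hterm w)]
    by_cases hMN : M ≤ N
    · rw [tele_sum (fun w => f (F w)) M N hMN]
      have hgM : f (F M) = 0 := by rw [hM M le_rfl, htop]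
      have hgN : f (F (N + 1)) = 0 := by rw [hN (N + 1) (by omega), hbot]
      rw [hgM, hgN]
      have hsum : ∑ w ∈ Finset.Icc (M + 1) N, f (F w) ≤ 0 :=
        Finset.sum_nonpos fun w _ => hfle w
      omega
    · rw [Finset.Icc_eq_empty hMN, Finset.sum_empty]
  · intro hfil E hE
    -- use the filtration ⊤ ⊇ E ⊇ ⊥ with weights
    set F : ℤ → Subobject A := fun w => if w ≤ 0 then ⊤ else if w ≤ 1 then E else ⊥ with hFdef
    have hanti : Antitone F := by
      intro x y hxy
      simp only [hFdef]
      split_ifs with h1 h2 h3 h4 h5 <;> first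
        | exact le_refl _
        | exact le_top
        | exact bot_le
        | omega
    have h1 := hfil F hanti 0 2 (fun w hw => by simp only [hFdef]; rw [if_neg (by omega), if_neg (by omega)]) (fun w hw => by simp only [hFdef]; rw [if_pos hw])
    have hF0 : F 0 = ⊤ := by simp [hFdef]
    have hF1 : F 1 = E := by simp only [hFdef]; norm_num
    have hF2 : F 2 = ⊥ := by simp only [hFdef]; norm_num
    have hF3 : F 3 = ⊥ := by simp only [hFdef]; norm_num
    rw [show Finset.Icc (0:ℤ) 2 = {0, 1, 2} by decide] at h1
    rw [Finset.sum_insert (by decide), Finset.sum_insert (by decide),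
      Finset.sum_singleton] at h1
    norm_num at h1
    rw [hF1, hF2, hF3] at h1
    -- f ⊥ = 0 pieces
    have hZ : IsZero (((⊥ : Subobject A) : C)) :=
      (isZero_zero C).of_iso Subobject.botCoeIsoZero
    have hb0 : b (((⊥ : Subobject A) : C)) = 0 := add_fn_zero b hb hZ
    have hl0 : ℓ (((⊥ : Subobject A) : C)) = 0 := add_fn_zero ℓ hℓ hZ
    rw [hb0, hl0] at h1
    linarith [h1, mul_comm (b ((E : C))) (ℓ A)]
end
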